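/- Let d ≥ 3 and let A ∈ ℂ^{d×d} satisfy condition (C_d). Then for every integer k ≥ 1, the function θ ↦ trace((e^{−iθ}A + e^{iθ}A*)^k) is periodic on ℝ with period 2π/d, i.e. trace((e^{−i(θ+2π/d)}A + e^{i(θ+2π/d)}A*)^k) = trace((e^{−iθ}A + e^{iθ}A*)^k) for all θ ∈ ℝ. -/

import Mathlib

set_option maxHeartbeats 1600000


open Matrix Complex

open Polynomial
section Aux
variable {n : ℕ} {M : Matrix (Fin n) (Fin n) ℂ}

lemma myConjPow (V D : Matrix (Fin n) (Fin n) ℂ) (hV : star V * V = 1) (hV' : V * star V = 1)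
    (k : ℕ) : (V * D * star V) ^ k = V * D ^ k * star V ∨ k = 0 := by
  rcases Nat.eq_zero_or_pos k with h | h
  · exact Or.inr h
  · left
    induction k with
    | zero => omega
    | succ m ih =>
      rcases Nat.eq_zero_or_pos m with hm | hm
      · subst hm; simp [pow_one]
      · rw [pow_succ, ih hm, pow_succ]
        calc V * D ^ m * star V * (V * D * star V)
            = V * D ^ m * (star V * V) * D * star V := by noncomm_ring
          _ = V * (D ^ m * D) * star V := by rw [hV]; noncomm_ring

lemma trace_pow_eq (hM : M.IsHermitian) (k : ℕ) (hk : 1 ≤ k) :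
    (M ^ k).trace = ∑ i, ((hM.eigenvalues i : ℂ)) ^ k := by
  set V : Matrix (Fin n) (Fin n) ℂ := (hM.eigenvectorUnitary : Matrix (Fin n) (Fin n) ℂ)
  have hV : star V * V = 1 := (Matrix.mem_unitaryGroup_iff').mp hM.eigenvectorUnitary.2
  have hV' : V * star V = 1 := (Matrix.mem_unitaryGroup_iff).mp hM.eigenvectorUnitary.2
  have hspec : M = V * diagonal (RCLike.ofReal ∘ hM.eigenvalues) * star V := hM.spectral_theorem
  rcases myConjPow V (diagonal (RCLike.ofReal ∘ hM.eigenvalues)) hV hV' k with h | h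
  · rw [congrArg (fun X => (X ^ k).trace) hspec, h, Matrix.trace_mul_cycle, hV,
      one_mul, diagonal_pow, trace_diagonal]
    simp [Function.comp]
  · omega

lemma det_smul_one_sub (hM : M.IsHermitian) (w : ℂ) :
    (w • (1 : Matrix (Fin n) (Fin n) ℂ) - M).det = ∏ i, (w - (hM.eigenvalues i : ℂ)) := by
  set V : Matrix (Fin n) (Fin n) ℂ := (hM.eigenvectorUnitary : Matrix (Fin n) (Fin n) ℂ)
  have hV : star V * V = 1 := (Matrix.mem_unitaryGroup_iff').mp hM.eigenvectorUnitary.2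
  have hV' : V * star V = 1 := (Matrix.mem_unitaryGroup_iff).mp hM.eigenvectorUnitary.2
  have key : w • (1 : Matrix (Fin n) (Fin n) ℂ) - M
      = V * (w • 1 - diagonal (RCLike.ofReal ∘ hM.eigenvalues)) * star V := by
    have h1 : V * (w • 1) * star V = w • (1 : Matrix (Fin n) (Fin n) ℂ) := by
      rw [Matrix.mul_smul, mul_one, Matrix.smul_mul, hV']
    rw [Matrix.mul_sub, Matrix.sub_mul, h1]
    congr 1
    exact hM.spectral_theorem
  rw [key, det_mul, det_mul, mul_comm, ← mul_assoc, ← det_mul, hV, det_one, one_mul]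
  rw [smul_eq_diagonal_mul, mul_one, diagonal_sub, det_diagonal]
  simp

/-- From equal characteristic functions, equal multisets of eigenvalues. -/
lemma multiset_eq {N : Matrix (Fin n) (Fin n) ℂ} (hM : M.IsHermitian) (hN : N.IsHermitian)
    (h : ∀ w : ℂ, ∏ i, (w - (hM.eigenvalues i : ℂ)) = ∏ i, (w - (hN.eigenvalues i : ℂ))) :
    (Finset.univ.val.map fun i => (hM.eigenvalues i : ℂ))
      = (Finset.univ.val.map fun i => (hN.eigenvalues i : ℂ)) := by
  set s := Finset.univ.val.map fun i => (hM.eigenvalues i : ℂ)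
  set t := Finset.univ.val.map fun i => (hN.eigenvalues i : ℂ)
  have hpq : (s.map fun a => X - C a).prod = (t.map fun a => X - C a).prod := by
    apply Polynomial.funext
    intro w
    have hs : ∀ (u : Multiset ℂ), ((u.map fun a => X - C a).prod).eval w
        = (u.map fun a => w - a).prod := by
      intro u
      rw [Polynomial.eval_multiset_prod, Multiset.map_map]
      simp [Function.comp]
    rw [hs, hs]
    simpa [s, t, Multiset.map_map, Function.comp_def, Finset.prod_eq_multiset_prod] using h w
  have := congrArg Polynomial.roots hpq
  rwa [Polynomial.roots_multiset_prod_X_sub_C, Polynomial.roots_multiset_prod_X_sub_C] at this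

end Aux

/-- Condition `(C_d)`. -/
def CondC {d : ℕ} (A : Matrix (Fin d) (Fin d) ℂ) : Prop :=
  ∃ P : Polynomial ℝ, ∀ θ : ℝ, ∀ w : ℂ,
    (w • (1 : Matrix (Fin d) (Fin d) ℂ)
        - (1/2 : ℂ) • (Complex.exp (-(θ : ℂ) * Complex.I) • A
            + Complex.exp ((θ : ℂ) * Complex.I) • Aᴴ)).det
      = Polynomial.aeval w P
        - ((-1/2 : ℂ)) ^ (d - 1)
            * ((Complex.exp (-(d : ℂ) * (θ : ℂ) * Complex.I) * A.det).re : ℂ)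

theorem stmt5 {d : ℕ} (hd : 3 ≤ d) (A : Matrix (Fin d) (Fin d) ℂ)
    (hC : CondC A) (k : ℕ) (hk : 1 ≤ k) (θ : ℝ) :
    ((Complex.exp (-(((θ + 2 * Real.pi / d) : ℝ) : ℂ) * Complex.I) • A
        + Complex.exp ((((θ + 2 * Real.pi / d) : ℝ) : ℂ) * Complex.I) • Aᴴ) ^ k).trace
      = ((Complex.exp (-(θ : ℂ) * Complex.I) • A
        + Complex.exp ((θ : ℂ) * Complex.I) • Aᴴ) ^ k).trace := by
  obtain ⟨P, hP⟩ := hC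
  set θ' : ℝ := θ + 2 * Real.pi / d with hθ'
  have hd0 : (d : ℂ) ≠ 0 := Nat.cast_ne_zero.mpr (by omega)
  set M : ℝ → Matrix (Fin d) (Fin d) ℂ := fun t =>
    (1/2 : ℂ) • (Complex.exp (-(t : ℂ) * Complex.I) • A
      + Complex.exp ((t : ℂ) * Complex.I) • Aᴴ) with hM
  have hH : ∀ t : ℝ, (M t).IsHermitian := by
    intro t
    unfold Matrix.IsHermitian
    simp [hM, conjTranspose_smul, conjTranspose_add, ← Complex.exp_conj, Complex.conj_I,
      _root_.map_mul]
    ring_nf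
    rw [add_comm]
  have hexp : Complex.exp (-(d : ℂ) * (θ' : ℂ) * Complex.I)
      = Complex.exp (-(d : ℂ) * (θ : ℂ) * Complex.I) := by
    have harg : -(d : ℂ) * (θ' : ℂ) * Complex.I
        = -(d : ℂ) * (θ : ℂ) * Complex.I + (-(2 * Real.pi * Complex.I)) := by
      push_cast [hθ']
      field_simp
      ring
    rw [harg, Complex.exp_add, Complex.exp_neg, Complex.exp_two_pi_mul_I]
    simp
  have hdet : ∀ w : ℂ, (w • (1 : Matrix (Fin d) (Fin d) ℂ) - M θ').det
      = (w • (1 : Matrix (Fin d) (Fin d) ℂ) - M θ).det := by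
    intro w
    rw [hM]
    simp only []
    rw [hP θ' w, hP θ w, hexp]
  have heq : ∀ w : ℂ, (∏ i, (w - ((hH θ').eigenvalues i : ℂ)))
      = ∏ i, (w - ((hH θ).eigenvalues i : ℂ)) := by
    intro w
    rw [← det_smul_one_sub (hH θ'), ← det_smul_one_sub (hH θ)]
    exact hdet w
  have hms := multiset_eq (hH θ') (hH θ) heq
  have hB : ∀ t : ℝ, (Complex.exp (-(t : ℂ) * Complex.I) • A
      + Complex.exp ((t : ℂ) * Complex.I) • Aᴴ) = (2 : ℂ) • M t := by
    intro t
    rw [hM]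
    rw [smul_smul]
    norm_num
  have htr : ∀ t : ℝ, (((2 : ℂ) • M t) ^ k).trace
      = (2 : ℂ) ^ k * ∑ i, ((hH t).eigenvalues i : ℂ) ^ k := by
    intro t
    rw [_root_.smul_pow ((2:ℂ)) (M t) k, trace_smul, trace_pow_eq (hH t) k hk, smul_eq_mul]
  rw [hB θ', hB θ, htr θ', htr θ]
  congr 1
  have aux : ∀ (g : Fin d → ℂ), (∑ i, g i ^ k)
      = ((Finset.univ.val.map g).map (fun z : ℂ => z ^ k)).sum := by
    intro g
    rw [Multiset.map_map]
    rfl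
  rw [aux, aux, hms]
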